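/- arXiv:2312.07109 — 2 statements merged into one kernel-verified Lean document; each statement's English description precedes it below -/
import Mathlib

section
/- For any nonnegative integers m and n with 2m + n ≥ 1, there is a perfect 4-coloring of the Doob graph D(m,n) with quotient matrix (2m+n)·(J − E) (every vertex of color i has exactly 2m+n neighbors of each color j ≠ i and no neighbor of its own color). -/
/-!
Colour a vertex `x` by `c(x) = ∑ (aᵢ + 2 bᵢ) + ∑ yⱼ ∈ ZMod 4`, where `(aᵢ, bᵢ)` are its
Shrikhande coordinates and `yⱼ` its `K₄` coordinates. The Doob graph is the Cayley graph of its
vertex group with respect to the single-coordinate moves, and `c` is a homomorphism, so the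
neighbours of `x` of colour `c(x) + δ` correspond to the moves of colour `δ`. A `K₄` move by `e`
has colour `e`, and `(a, b) ↦ a + 2b` sends the six Shrikhande generators onto each of `1, 2, 3`
exactly twice: every `δ ≠ 0` is the colour of `2m + n` moves, and `0` of none.
-/

open SimpleGraph

/-- The Shrikhande graph: Cayley graph on `ZMod 4 × ZMod 4` with connection set
`{(0,1),(0,3),(1,0),(3,0),(1,1),(3,3)}`. -/
def shrikhande : SimpleGraph (ZMod 4 × ZMod 4) :=
  SimpleGraph.fromRel (fun x y =>
    x - y ∈ ({(0, 1), (0, 3), (1, 0), (3, 0), (1, 1), (3, 3)} : Set (ZMod 4 × ZMod 4)))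

/-- Vertices of the Doob graph `D(m,n)`. -/
abbrev DoobVertex (m n : ℕ) := (Fin m → ZMod 4 × ZMod 4) × (Fin n → ZMod 4)

/-- The Doob graph `D(m,n)`: the Cartesian (box) product of `m` copies of the
Shrikhande graph and `n` copies of the complete graph `K₄`. Two vertices are
adjacent iff they differ in exactly one coordinate and are adjacent in the
corresponding factor. -/
def doobGraph (m n : ℕ) : SimpleGraph (DoobVertex m n) :=
  SimpleGraph.fromRel (fun x y =>
    (∃ i, shrikhande.Adj (x.1 i) (y.1 i) ∧ (∀ j, j ≠ i → x.1 j = y.1 j) ∧ x.2 = y.2) ∨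
    (∃ i, x.2 i ≠ y.2 i ∧ (∀ j, j ≠ i → x.2 j = y.2 j) ∧ x.1 = y.1))

/-- `f` is a perfect coloring of `G` with quotient matrix `S`: `f` is surjective and
every vertex of color `i` has exactly `S i j` neighbors of color `j`. -/
def IsPerfectColoring {V C : Type*} (G : SimpleGraph V) (f : V → C)
    (S : Matrix C C ℕ) : Prop :=
  Function.Surjective f ∧
    ∀ x c, {y | G.Adj x y ∧ f y = c}.ncard = S (f x) c

theorem Pi.single_eq_single_iff_of_ne_zero {ι A : Type*} [DecidableEq ι] [Zero A] {i j : ι}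
    {a b : A} (ha : a ≠ 0) : (Pi.single i a : ι → A) = Pi.single j b ↔ i = j ∧ a = b := by
  constructor
  · intro h
    obtain rfl : i = j := by
      by_contra hij
      exact ha (by simpa [hij] using congrFun h i)
    exact ⟨rfl, Pi.single_injective i h⟩
  · rintro ⟨rfl, rfl⟩
    rfl

theorem Pi.sub_eq_single_iff {ι A : Type*} [DecidableEq ι] [AddGroup A] {u v : ι → A} {i : ι}
    {d : A} : v - u = Pi.single i d ↔ v i - u i = d ∧ ∀ j ≠ i, u j = v j := by
  simp only [funext_iff, Pi.sub_apply]
  constructor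
  · intro h
    refine ⟨by simpa using h i, fun j hj => ?_⟩
    simpa [Pi.single_eq_of_ne hj, sub_eq_zero, eq_comm] using h j
  · rintro ⟨hi, hj⟩ j
    rcases eq_or_ne j i with rfl | hji
    · simpa using hi
    · simp [Pi.single_eq_of_ne hji, hj j hji]

section Cayley

variable {V C : Type*} [AddCommGroup V] [AddCommGroup C] {G : SimpleGraph V} {S : Set V}

theorem ncard_adj_and_map_eq (hG : ∀ x y, G.Adj x y ↔ y - x ∈ S) (φ : V →+ C) (x : V) (c : C) :
    {y | G.Adj x y ∧ φ y = c}.ncard = {s ∈ S | φ s = c - φ x}.ncard := by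
  have : {y | G.Adj x y ∧ φ y = c} = (x + ·) '' {s ∈ S | φ s = c - φ x} := by
    ext y
    simp only [Set.mem_ofPred_eq, Set.mem_image, hG]
    constructor
    · rintro ⟨hy, rfl⟩
      exact ⟨y - x, ⟨hy, map_sub φ y x⟩, add_sub_cancel x y⟩
    · rintro ⟨s, ⟨hs, hφs⟩, rfl⟩
      simp [hs, hφs]
  rw [this, Set.ncard_image_of_injective _ (add_right_injective x)]

theorem isPerfectColoring_of_cayley [DecidableEq C] (hG : ∀ x y, G.Adj x y ↔ y - x ∈ S)
    (φ : V →+ C) {k : ℕ} (hk : k ≠ 0) (hS₀ : ∀ s ∈ S, φ s ≠ 0)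
    (hS : ∀ δ ≠ 0, {s ∈ S | φ s = δ}.ncard = k) :
    IsPerfectColoring G φ (fun i j => if i = j then 0 else k) := by
  have hcount (x : V) (c : C) :
      {y | G.Adj x y ∧ φ y = c}.ncard = if φ x = c then 0 else k := by
    rw [ncard_adj_and_map_eq hG]
    split_ifs with hc
    · rw [← hc, sub_self, Set.sep_eq_empty_iff_mem_false.2 hS₀, Set.ncard_empty]
    · exact hS _ (sub_ne_zero.2 (Ne.symm hc))
  refine ⟨fun c => ?_, hcount⟩
  by_cases hc : φ 0 = c
  · exact ⟨0, hc⟩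
  · have := hcount 0 c
    rw [if_neg hc] at this
    obtain ⟨y, -, hy⟩ := Set.nonempty_of_ncard_ne_zero (this ▸ hk)
    exact ⟨y, hy⟩

end Cayley

def shrikhandeConnection : Finset (ZMod 4 × ZMod 4) :=
  {(0, 1), (0, 3), (1, 0), (3, 0), (1, 1), (3, 3)}

theorem shrikhande_adj_iff (a b : ZMod 4 × ZMod 4) :
    shrikhande.Adj a b ↔ b - a ∈ shrikhandeConnection := by
  revert a b
  simp only [shrikhande, fromRel_adj, Set.mem_insert_iff, Set.mem_singleton_iff,
    shrikhandeConnection, Finset.mem_insert, Finset.mem_singleton]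
  decide

theorem ne_zero_of_mem_shrikhandeConnection {d : ZMod 4 × ZMod 4} :
    d ∈ shrikhandeConnection → d ≠ 0 := by
  revert d
  decide

theorem neg_mem_shrikhandeConnection {d : ZMod 4 × ZMod 4} :
    d ∈ shrikhandeConnection → -d ∈ shrikhandeConnection := by
  revert d
  decide

def shrikhandeColor : ZMod 4 × ZMod 4 →+ ZMod 4 :=
  AddMonoidHom.fst _ _ + 2 • AddMonoidHom.snd _ _

theorem shrikhandeColor_ne_zero : ∀ d ∈ shrikhandeConnection, shrikhandeColor d ≠ 0 := by
  decide

theorem card_filter_shrikhandeColor_eq :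
    ∀ δ ≠ 0, (shrikhandeConnection.filter (shrikhandeColor · = δ)).card = 2 := by
  decide

section Doob

variable {m n : ℕ}

abbrev DoobMove (m n : ℕ) := (Fin m × shrikhandeConnection) ⊕ (Fin n × {e : ZMod 4 // e ≠ 0})

def doobStep : DoobMove m n → DoobVertex m n
  | .inl (i, d) => (Pi.single i d, 0)
  | .inr (j, e) => (0, Pi.single j e)

theorem doobStep_injective : Function.Injective (doobStep (m := m) (n := n)) := by
  rintro (⟨i, d⟩ | ⟨j, e⟩) (⟨i', d'⟩ | ⟨j', e'⟩) h <;>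
    simp only [doobStep, Prod.mk.injEq] at h
  · obtain ⟨rfl, hd⟩ :=
      (Pi.single_eq_single_iff_of_ne_zero (ne_zero_of_mem_shrikhandeConnection d.2)).1 h.1
    rw [Subtype.ext hd]
  · exact absurd (Pi.single_eq_zero_iff.1 h.1) (ne_zero_of_mem_shrikhandeConnection d.2)
  · exact absurd (Pi.single_eq_zero_iff.1 h.2) e.2
  · obtain ⟨rfl, he⟩ := (Pi.single_eq_single_iff_of_ne_zero e.2).1 h.2
    rw [Subtype.ext he]

theorem doobStep_ne_zero (t : DoobMove m n) : doobStep t ≠ 0 := by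
  rcases t with ⟨i, d, hd⟩ | ⟨j, e, he⟩
  · simp [doobStep, Prod.ext_iff, ne_zero_of_mem_shrikhandeConnection hd]
  · simp [doobStep, Prod.ext_iff, he]

theorem neg_mem_range_doobStep {s : DoobVertex m n} (hs : s ∈ Set.range doobStep) :
    -s ∈ Set.range doobStep := by
  obtain ⟨⟨i, d, hd⟩ | ⟨j, e, he⟩, rfl⟩ := hs
  · exact ⟨.inl (i, ⟨-d, neg_mem_shrikhandeConnection hd⟩), by simp [doobStep, Pi.single_neg]⟩
  · exact ⟨.inr (j, ⟨-e, neg_ne_zero.2 he⟩), by simp [doobStep, Pi.single_neg]⟩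

theorem sub_mem_range_doobStep_iff (x y : DoobVertex m n) :
    y - x ∈ Set.range doobStep ↔
      (∃ i, shrikhande.Adj (x.1 i) (y.1 i) ∧ (∀ j, j ≠ i → x.1 j = y.1 j) ∧ x.2 = y.2) ∨
      (∃ i, x.2 i ≠ y.2 i ∧ (∀ j, j ≠ i → x.2 j = y.2 j) ∧ x.1 = y.1) := by
  constructor
  · rintro ⟨⟨i, d, hd⟩ | ⟨j, e, he⟩, h⟩ <;>
      simp only [doobStep, Prod.ext_iff, Prod.fst_sub, Prod.snd_sub] at h
    · obtain ⟨hdi, hi⟩ := Pi.sub_eq_single_iff.1 h.1.symm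
      exact .inl ⟨i, (shrikhande_adj_iff _ _).2 (hdi ▸ hd), hi, (sub_eq_zero.1 h.2.symm).symm⟩
    · obtain ⟨hej, hj⟩ := Pi.sub_eq_single_iff.1 h.2.symm
      exact .inr ⟨j, fun hxy => he (by rw [← hej, hxy, sub_self]), hj,
        (sub_eq_zero.1 h.1.symm).symm⟩
  · rintro (⟨i, hadj, hi, h2⟩ | ⟨j, hne, hj, h1⟩)
    · refine ⟨.inl (i, ⟨y.1 i - x.1 i, (shrikhande_adj_iff _ _).1 hadj⟩), ?_⟩
      exact Prod.ext (Pi.sub_eq_single_iff.2 ⟨rfl, hi⟩).symm (by simp [doobStep, h2])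
    · refine ⟨.inr (j, ⟨y.2 j - x.2 j, sub_ne_zero.2 hne.symm⟩), ?_⟩
      exact Prod.ext (by simp [doobStep, h1]) (Pi.sub_eq_single_iff.2 ⟨rfl, hj⟩).symm

theorem doobGraph_adj_iff (x y : DoobVertex m n) :
    (doobGraph m n).Adj x y ↔ y - x ∈ Set.range doobStep := by
  rw [doobGraph, fromRel_adj, ← sub_mem_range_doobStep_iff, ← sub_mem_range_doobStep_iff]
  constructor
  · rintro ⟨-, h | h⟩
    · exact h
    · simpa using neg_mem_range_doobStep h
  · intro h
    refine ⟨fun hxy => ?_, .inl h⟩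
    obtain ⟨t, ht⟩ := h
    exact doobStep_ne_zero t (by rw [ht, hxy, sub_self])

variable (m n) in
def doobColor : DoobVertex m n →+ ZMod 4 :=
  AddMonoidHom.mk' (fun x => ∑ i, shrikhandeColor (x.1 i) + ∑ j, x.2 j) fun x y => by
    simp only [Prod.fst_add, Prod.snd_add, Pi.add_apply, map_add, Finset.sum_add_distrib]
    abel

theorem doobColor_doobStep_inl (i : Fin m) (d : shrikhandeConnection) :
    doobColor m n (doobStep (.inl (i, d))) = shrikhandeColor d := by
  simp [doobColor, doobStep, Pi.apply_single (fun _ => shrikhandeColor) fun _ => map_zero _]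

theorem doobColor_doobStep_inr (j : Fin n) (e : {e : ZMod 4 // e ≠ 0}) :
    doobColor m n (doobStep (.inr (j, e))) = e := by
  simp [doobColor, doobStep]

theorem doobColor_doobStep_ne_zero (t : DoobMove m n) :
    doobColor m n (doobStep t) ≠ 0 := by
  rcases t with ⟨i, d⟩ | ⟨j, e⟩
  · rw [doobColor_doobStep_inl]
    exact shrikhandeColor_ne_zero d d.2
  · rw [doobColor_doobStep_inr]
    exact e.2

theorem ncard_range_doobStep_sep_doobColor_eq {δ : ZMod 4} (hδ : δ ≠ 0) :
    {s ∈ Set.range doobStep | doobColor m n s = δ}.ncard = 2 * m + n := by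
  rw [← Set.ncard_preimage_of_injective_subset_range doobStep_injective (Set.sep_subset _ _)]
  simp only [Set.preimage_ofPred_eq, Set.mem_range_self, true_and]
  rw [Set.ncard_eq_toFinset_card', Set.toFinset_ofPred, Finset.card_filter, Fintype.sum_sum_type,
    Fintype.sum_prod_type, Fintype.sum_prod_type]
  simp only [doobColor_doobStep_inl, doobColor_doobStep_inr]
  have hShrikhande : ∑ d : shrikhandeConnection, (if shrikhandeColor d = δ then 1 else 0) = 2 := by
    rw [Finset.sum_coe_sort shrikhandeConnection fun d => if shrikhandeColor d = δ then 1 else 0,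
      ← Finset.card_filter, card_filter_shrikhandeColor_eq δ hδ]
  have hK₄ : ∀ ε : ZMod 4, ε ≠ 0 →
      ∑ e : {e : ZMod 4 // e ≠ 0}, (if (e : ZMod 4) = ε then 1 else 0) = 1 := by
    decide
  simp only [hShrikhande, hK₄ δ hδ, Finset.sum_const, Finset.card_univ, Fintype.card_fin,
    smul_eq_mul]
  ring

end Doob

theorem stmt_4 (m n : ℕ) (hmn : 1 ≤ 2 * m + n) :
    ∃ f : DoobVertex m n → Fin 4,
      IsPerfectColoring (doobGraph m n) f
        (fun i j => if i = j then 0 else 2 * m + n) :=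
  -- `ZMod 4` is definitionally `Fin 4`.
  ⟨doobColor m n, isPerfectColoring_of_cayley doobGraph_adj_iff (doobColor m n) (by omega)
    (by rintro _ ⟨t, rfl⟩; exact doobColor_doobStep_ne_zero t)
    fun _ => ncard_range_doobStep_sep_doobColor_eq⟩
end

section
/- For positive integer b and nonnegative integers m, n with 2m + n ≥ 1, there exists a perfect (b,b)-coloring of the Doob graph D(m,n) if and only if b is even and 2b = 4i for some i ∈ {1,...,2m+n}. -/
open SimpleGraph

/-- A perfect `(b,c)`-coloring: a perfect 2-coloring in which every vertex of
color `0` has exactly `b` neighbors of color `1`, every vertex of color `1` has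
exactly `c` neighbors of color `0` (and the numbers of same-color neighbors are
also constant on each color class). -/
def IsPerfectBCColoring {V : Type*} (G : SimpleGraph V) (f : V → Fin 2)
    (b c : ℕ) : Prop :=
  ∃ a d : ℕ,
    IsPerfectColoring G f (Matrix.of ![![a, b], ![c, d]])

/-
`D(m,n)` is the Cayley graph of `(ZMod 4 × ZMod 4)^m × (ZMod 4)^n` whose connection set `S` is
the union of the Shrikhande connection set in each `ZMod 4 × ZMod 4`-coordinate and of the
nonzero elements in each `ZMod 4`-coordinate. Since the graph is regular, a perfect
`(b,b)`-coloring is just a two-coloring in which every vertex has exactly `b` neighbours of the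
other colour.

If `f` is such a coloring, `χ x = (-1)^(f x)` satisfies `∑ s ∈ S, (χ (x - s) - χ x) = -2b χ x`.
Testing this against a character `ψ` at which `χ` has a nonzero Fourier coefficient gives
`-2b = ∑ s ∈ S, (ψ s - 1)`, and this character sum splits over the coordinates into terms `-4a`
with `a ≤ 2` on a Shrikhande factor and `a ≤ 1` on a `K₄` factor. Hence `b = 2I` with
`1 ≤ I ≤ 2m + n`.

Conversely, write `I` as a sum of weights `w ≤ 2` on the Shrikhande factors and `w ≤ 1` on the
`K₄` factors, colour each factor so that every vertex has exactly `2w` neighbours of the other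
colour, and add these colourings in `Fin 2`.
-/

open Finset

lemma Fin.two_eq_or_eq_of_ne {p q : Fin 2} (h : p ≠ q) (c : Fin 2) : c = p ∨ c = q := by
  omega

lemma Fin.two_eq_iff_ne_of_ne {p q c : Fin 2} (h : c ≠ q) : p = c ↔ p ≠ q := by
  omega

section Cayley

variable {G : Type*} [AddCommGroup G]

lemma SimpleGraph.fromRel_adj_iff_sub_mem {r : G → G → Prop} {S : Finset G}
    (hr : ∀ x y, r x y ↔ x - y ∈ S) (hS₀ : 0 ∉ S) (hS : ∀ s ∈ S, -s ∈ S) {x y : G} :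
    (SimpleGraph.fromRel r).Adj x y ↔ x - y ∈ S := by
  rw [SimpleGraph.fromRel_adj, hr, hr, ← neg_sub x y]
  refine ⟨fun ⟨_, h⟩ => h.elim id fun h => by simpa using hS _ h, fun h => ⟨?_, Or.inl h⟩⟩
  rintro rfl
  exact hS₀ (by simpa using h)

variable {Γ : SimpleGraph G} {S : Finset G}

lemma ncard_adj_and_eq (hΓ : ∀ x y, Γ.Adj x y ↔ x - y ∈ S) {C : Type*} [DecidableEq C]
    (f : G → C) (x : G) (c : C) : {y | Γ.Adj x y ∧ f y = c}.ncard = #{s ∈ S | f (x - s) = c} := by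
  rw [← Set.ncard_coe_finset]
  refine Set.ncard_congr (fun y _ => x - y) ?_ (fun _ _ _ _ h => sub_right_injective h) ?_
  · rintro y ⟨hy, rfl⟩
    simpa [← hΓ]
  · intro s hs
    refine ⟨x - s, ?_, sub_sub_cancel x s⟩
    simpa [hΓ] using hs

lemma isPerfectBCColoring_iff_card_filter_ne (hΓ : ∀ x y, Γ.Adj x y ↔ x - y ∈ S)
    {f : G → Fin 2} {b : ℕ} (hb : 0 < b) :
    IsPerfectBCColoring Γ f b b ↔ ∀ x, #{s ∈ S | f (x - s) ≠ f x} = b := by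
  have hM : ∀ a d : ℕ, ∀ p q : Fin 2, q ≠ p → Matrix.of ![![a, b], ![b, d]] p q = b := by
    intro a d p q h; fin_cases p <;> fin_cases q <;> simp_all
  constructor
  · rintro ⟨a, d, -, hcount⟩ x
    have hne : f x + 1 ≠ f x := by omega
    rw [← hM a d _ _ hne, ← hcount, ncard_adj_and_eq hΓ]
    simp only [Fin.two_eq_iff_ne_of_ne hne]
  · intro hopp
    have hsame : ∀ x, #{s ∈ S | f (x - s) = f x} = #S - b := by
      intro x
      rw [← hopp x, ← card_filter_add_card_filter_not (s := S) (fun s => f (x - s) = f x)]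
      simp
    obtain ⟨s, hs⟩ := card_pos.1 (hb.trans_eq (hopp 0).symm)
    refine ⟨#S - b, #S - b, fun c => ?_, fun x c => ?_⟩
    · rcases Fin.two_eq_or_eq_of_ne (mem_filter.1 hs).2 c with rfl | rfl <;> exact ⟨_, rfl⟩
    rw [ncard_adj_and_eq hΓ]
    by_cases hc : c = f x
    · subst hc; rw [hsame]; generalize f x = p; fin_cases p <;> rfl
    · simp only [Fin.two_eq_iff_ne_of_ne hc, hopp, hM _ _ _ _ hc]

lemma sum_neg_one_pow_sub_eq {f : G → Fin 2} {b : ℕ}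
    (hf : ∀ x, #{s ∈ S | f (x - s) ≠ f x} = b) (x : G) :
    ∑ s ∈ S, ((-1 : ℂ) ^ (f (x - s) : ℕ) - (-1) ^ (f x : ℕ)) = -2 * b * (-1) ^ (f x : ℕ) := by
  have key : ∀ p q : Fin 2,
      (-1 : ℂ) ^ (p : ℕ) - (-1) ^ (q : ℕ) = if p ≠ q then -2 * (-1) ^ (q : ℕ) else 0 := by
    intro p q; fin_cases p <;> fin_cases q <;> norm_num
  rw [sum_congr rfl fun s _ => key _ _, ← sum_filter, sum_const, hf x, nsmul_eq_mul]
  ring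

end Cayley

section Spectrum

variable {G : Type*} [AddCommGroup G] [Fintype G]

lemma AddChar.sum_mul_apply_sub (ψ : AddChar G ℂ) (χ : G → ℂ) (s : G) :
    ∑ x, χ (x - s) * ψ x = ψ s * ∑ x, χ x * ψ x := by
  rw [← Equiv.sum_comp (Equiv.addRight s), mul_sum]
  refine sum_congr rfl fun x _ => ?_
  simp only [Equiv.coe_addRight, add_sub_cancel_right, AddChar.map_add_eq_mul]
  ring

lemma exists_addChar_sum_mul_ne_zero {χ : G → ℂ} (hχ : χ ≠ 0) :
    ∃ ψ : AddChar G ℂ, ∑ x, χ x * ψ x ≠ 0 := by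
  classical
  obtain ⟨y, hy⟩ := Function.ne_iff.1 hχ
  by_contra! h
  have key : ∑ ψ : AddChar G ℂ, (∑ x, χ x * ψ x) * ψ (-y) = Fintype.card G * χ y := by
    simp_rw [sum_mul, mul_assoc, ← AddChar.map_add_eq_mul, ← sub_eq_add_neg]
    rw [sum_comm]
    simp_rw [← mul_sum, AddChar.sum_apply_eq_ite, sub_eq_zero, mul_ite, mul_zero,
      sum_ite_eq', mem_univ, if_true, mul_comm]
  simp only [h, zero_mul, sum_const_zero] at key
  exact mul_ne_zero (Nat.cast_ne_zero.2 Fintype.card_ne_zero) hy key.symm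

theorem exists_addChar_sum_sub_one_eq (S : Finset G) {χ : G → ℂ} (hχ : χ ≠ 0) {μ : ℂ}
    (h : ∀ x, ∑ s ∈ S, (χ (x - s) - χ x) = μ * χ x) :
    ∃ ψ : AddChar G ℂ, ∑ s ∈ S, (ψ s - 1) = μ := by
  obtain ⟨ψ, hψ⟩ := exists_addChar_sum_mul_ne_zero hχ
  refine ⟨ψ, mul_right_cancel₀ hψ ?_⟩
  calc (∑ s ∈ S, (ψ s - 1)) * ∑ x, χ x * ψ x
      = ∑ s ∈ S, ∑ x, (χ (x - s) - χ x) * ψ x := by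
        simp_rw [sum_mul, sub_mul, sum_sub_distrib, AddChar.sum_mul_apply_sub, one_mul]
    _ = ∑ x, (μ * χ x) * ψ x := by
        rw [sum_comm]; simp_rw [← h, sum_mul]
    _ = μ * ∑ x, χ x * ψ x := by simp_rw [mul_sum, mul_assoc]

end Spectrum

open Complex in
lemma Complex.eq_one_or_eq_neg_one_or_eq_I_or_eq_neg_I_of_pow_four_eq_one {z : ℂ}
    (hz : z ^ 4 = 1) : z = 1 ∨ z = -1 ∨ z = I ∨ z = -I := by
  have h : (z - 1) * (z + 1) * ((z - I) * (z + I)) = 0 := by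
    linear_combination hz - (z ^ 2 - 1) * I_sq
  simp only [mul_eq_zero, sub_eq_zero, add_eq_zero_iff_eq_neg] at h
  tauto

lemma AddChar.apply_pow_eq_one_of_nsmul_eq_zero {A M : Type*} [AddMonoid A] [Monoid M]
    (φ : AddChar A M) {n : ℕ} {a : A} (ha : n • a = 0) : φ a ^ n = 1 := by
  rw [← AddChar.map_nsmul_eq_pow, ha, AddChar.map_zero_eq_one]

lemma Pi.single_eq_iff {ι A : Type*} [DecidableEq ι] [Zero A] {i : ι} {u : A} {v : ι → A} :
    Pi.single i u = v ↔ v i = u ∧ ∀ j ≠ i, v j = 0 := by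
  constructor
  · rintro rfl
    exact ⟨by simp, fun j hj => Pi.single_eq_of_ne hj _⟩
  · rintro ⟨rfl, hv⟩
    funext j
    rcases eq_or_ne j i with rfl | hj
    · simp
    · simp [hv j hj, Pi.single_eq_of_ne hj]

lemma Pi.injOn_single {ι A : Type*} [DecidableEq ι] [Zero A] :
    Set.InjOn (fun p : ι × A => (Pi.single p.1 p.2 : ι → A)) {p | p.2 ≠ 0} := by
  rintro ⟨i, u⟩ hu ⟨j, v⟩ - h
  obtain rfl : i = j := by
    by_contra hij
    exact hu (by simpa [Pi.single_eq_of_ne hij] using congrFun h i)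
  simpa using Pi.single_injective i h

lemma Finset.sum_apply_sub_single_sub {ι A M : Type*} [Fintype ι] [DecidableEq ι]
    [AddCommGroup A] [AddCommGroup M] (g : ι → A → M) (x : ι → A) (i : ι) (u : A) :
    ∑ j, g j ((x - Pi.single i u : ι → A) j) - ∑ j, g j (x j) = g i (x i - u) - g i (x i) := by
  rw [← sum_sub_distrib, sum_eq_single i (fun j _ hj => by simp [Pi.single_eq_of_ne hj])
    (by simp)]
  simp

lemma Finset.exists_le_sum_eq {ι : Type*} (s : Finset ι) (c : ι → ℕ) {k : ℕ}
    (hk : k ≤ ∑ i ∈ s, c i) : ∃ w ≤ c, ∑ i ∈ s, w i = k := by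
  classical
  induction s using Finset.induction_on generalizing k with
  | empty => exact ⟨0, fun _ => Nat.zero_le _, by rw [sum_empty] at hk; simp; omega⟩
  | insert a s ha ih =>
    rw [sum_insert ha] at hk
    by_cases hks : k ≤ ∑ i ∈ s, c i
    · obtain ⟨w, hw, rfl⟩ := ih hks
      refine ⟨Function.update w a 0, fun i => ?_, ?_⟩
      · rcases eq_or_ne i a with rfl | hi <;> simp [*, hw i]
      · simp [sum_insert ha, sum_update_of_notMem ha]
    · refine ⟨Function.update c a (k - ∑ i ∈ s, c i), fun i => ?_, ?_⟩
      · rcases eq_or_ne i a with rfl | hi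
        · simp; omega
        · simp [hi]
      · simp [sum_insert ha, sum_update_of_notMem ha]
        omega

def shrikhandeConn : Finset (ZMod 4 × ZMod 4) :=
  {(0, 1), (0, 3), (1, 0), (3, 0), (1, 1), (3, 3)}

def k4Conn : Finset (ZMod 4) := {1, 2, 3}

lemma zero_notMem_shrikhandeConn : (0 : ZMod 4 × ZMod 4) ∉ shrikhandeConn := by decide

lemma shrikhande_adj_iff_s17 {u v : ZMod 4 × ZMod 4} : shrikhande.Adj u v ↔ u - v ∈ shrikhandeConn :=
  SimpleGraph.fromRel_adj_iff_sub_mem (fun _ _ => by simp [shrikhandeConn])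
    zero_notMem_shrikhandeConn (by decide)

lemma mem_k4Conn {t : ZMod 4} : t ∈ k4Conn ↔ t ≠ 0 := by
  revert t; decide

lemma zero_notMem_k4Conn : (0 : ZMod 4) ∉ k4Conn := by decide

lemma neg_mem_shrikhandeConn : ∀ u ∈ shrikhandeConn, -u ∈ shrikhandeConn := by decide

lemma neg_mem_k4Conn : ∀ t ∈ k4Conn, -t ∈ k4Conn := by decide

lemma exists_sum_k4Conn_addChar (φ : AddChar (ZMod 4) ℂ) :
    ∃ a : ℕ, a ≤ 1 ∧ ∑ t ∈ k4Conn, (φ t - 1) = -4 * a := by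
  have hsum : ∑ t ∈ k4Conn, (φ t - 1) = (φ 1 - 1) + (φ 1 ^ 2 - 1) + (φ 1 ^ 3 - 1) := by
    rw [k4Conn, sum_insert (by decide), sum_insert (by decide), sum_singleton,
      show (2 : ZMod 4) = 2 • 1 by decide, show (3 : ZMod 4) = 3 • 1 by decide,
      AddChar.map_nsmul_eq_pow, AddChar.map_nsmul_eq_pow, add_assoc]
  have hx := φ.apply_pow_eq_one_of_nsmul_eq_zero (n := 4) (a := 1) (by decide)
  generalize φ 1 = x at hx hsum
  have : ∑ t ∈ k4Conn, (φ t - 1) = 0 ∨ ∑ t ∈ k4Conn, (φ t - 1) = -4 := by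
    rcases Complex.eq_one_or_eq_neg_one_or_eq_I_or_eq_neg_I_of_pow_four_eq_one hx
      with rfl | rfl | rfl | rfl <;> norm_num [hsum, Complex.ext_iff, pow_succ]
  rcases this with h | h
  exacts [⟨0, by norm_num, by simp [h]⟩, ⟨1, le_rfl, by simp [h]⟩]

lemma exists_sum_shrikhandeConn_addChar (φ : AddChar (ZMod 4 × ZMod 4) ℂ) :
    ∃ a : ℕ, a ≤ 2 ∧ ∑ u ∈ shrikhandeConn, (φ u - 1) = -4 * a := by
  have hsum : ∑ u ∈ shrikhandeConn, (φ u - 1) =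
      (φ (0, 1) - 1) + ((φ (0, 1) ^ 3 - 1) + ((φ (1, 0) - 1) + ((φ (1, 0) ^ 3 - 1) +
        ((φ (1, 0) * φ (0, 1) - 1) + ((φ (1, 0) * φ (0, 1)) ^ 3 - 1))))) := by
    rw [shrikhandeConn, sum_insert (by decide), sum_insert (by decide), sum_insert (by decide),
      sum_insert (by decide), sum_insert (by decide), sum_singleton,
      show ((3, 3) : ZMod 4 × ZMod 4) = 3 • ((1, 0) + (0, 1)) by decide,
      show ((1, 1) : ZMod 4 × ZMod 4) = (1, 0) + (0, 1) by decide,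
      show ((3, 0) : ZMod 4 × ZMod 4) = 3 • (1, 0) by decide,
      show ((0, 3) : ZMod 4 × ZMod 4) = 3 • (0, 1) by decide]
    simp only [AddChar.map_nsmul_eq_pow, AddChar.map_add_eq_mul]
  have hx := φ.apply_pow_eq_one_of_nsmul_eq_zero (n := 4) (a := (1, 0)) (by decide)
  have hy := φ.apply_pow_eq_one_of_nsmul_eq_zero (n := 4) (a := (0, 1)) (by decide)
  generalize φ (1, 0) = x at hx hsum
  generalize φ (0, 1) = y at hy hsum
  have : ∑ u ∈ shrikhandeConn, (φ u - 1) = 0 ∨ ∑ u ∈ shrikhandeConn, (φ u - 1) = -4 ∨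
      ∑ u ∈ shrikhandeConn, (φ u - 1) = -8 := by
    rcases Complex.eq_one_or_eq_neg_one_or_eq_I_or_eq_neg_I_of_pow_four_eq_one hx
      with rfl | rfl | rfl | rfl <;>
    rcases Complex.eq_one_or_eq_neg_one_or_eq_I_or_eq_neg_I_of_pow_four_eq_one hy
      with rfl | rfl | rfl | rfl <;>
    norm_num [hsum, Complex.ext_iff, pow_succ]
  rcases this with h | h | h
  exacts [⟨0, by norm_num, by simp [h]⟩, ⟨1, by norm_num, by simp [h]⟩,
    ⟨2, le_rfl, by norm_num [h]⟩]

lemma exists_shrikhande_coloring {w : ℕ} (hw : w ≤ 2) :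
    ∃ g : ZMod 4 × ZMod 4 → Fin 2, ∀ v, #{u ∈ shrikhandeConn | g (v - u) ≠ g v} = 2 * w := by
  interval_cases w
  exacts [⟨fun _ => 0, by decide⟩, ⟨fun u => if u.1.val < 2 then 1 else 0, by decide⟩,
    ⟨fun u => Fin.ofNat 2 u.1.val, by decide⟩]

lemma exists_k4_coloring {w : ℕ} (hw : w ≤ 1) :
    ∃ g : ZMod 4 → Fin 2, ∀ v, #{t ∈ k4Conn | g (v - t) ≠ g v} = 2 * w := by
  interval_cases w
  exacts [⟨fun _ => 0, by decide⟩, ⟨fun t => Fin.ofNat 2 t.val, by decide⟩]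

namespace Doob

variable {m n : ℕ}

def singleS (i : Fin m) : ZMod 4 × ZMod 4 →+ DoobVertex m n :=
  (AddMonoidHom.inl _ _).comp (AddMonoidHom.single (fun _ => ZMod 4 × ZMod 4) i)

def singleK (i : Fin n) : ZMod 4 →+ DoobVertex m n :=
  (AddMonoidHom.inr _ _).comp (AddMonoidHom.single (fun _ => ZMod 4) i)

@[simp] lemma singleS_apply (i : Fin m) (u : ZMod 4 × ZMod 4) :
    (singleS i u : DoobVertex m n) = (Pi.single i u, 0) := rfl

@[simp] lemma singleK_apply (i : Fin n) (t : ZMod 4) :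
    (singleK i t : DoobVertex m n) = (0, Pi.single i t) := rfl

variable (m n) in
def conn : Finset (DoobVertex m n) :=
  (univ ×ˢ shrikhandeConn).image (fun p => singleS p.1 p.2) ∪
    (univ ×ˢ k4Conn).image (fun p => singleK p.1 p.2)

lemma mem_conn {z : DoobVertex m n} : z ∈ conn m n ↔
    (∃ i, z.1 i ∈ shrikhandeConn ∧ (∀ j ≠ i, z.1 j = 0) ∧ z.2 = 0) ∨
      (∃ i, z.2 i ∈ k4Conn ∧ (∀ j ≠ i, z.2 j = 0) ∧ z.1 = 0) := by
  obtain ⟨z₁, z₂⟩ := z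
  simp only [conn, mem_union, mem_image, mem_product, mem_univ, true_and, singleS_apply,
    singleK_apply, Prod.mk.injEq, Pi.single_eq_iff]
  refine or_congr ⟨?_, ?_⟩ ⟨?_, ?_⟩
  · rintro ⟨⟨i, u⟩, hu, ⟨hi, h⟩, rfl⟩
    exact ⟨i, hi ▸ hu, h, rfl⟩
  · rintro ⟨i, hi, h, rfl⟩
    exact ⟨⟨i, _⟩, hi, ⟨rfl, h⟩, rfl⟩
  · rintro ⟨⟨i, t⟩, ht, rfl, hi, h⟩
    exact ⟨i, hi ▸ ht, h, rfl⟩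
  · rintro ⟨i, hi, h, rfl⟩
    exact ⟨⟨i, _⟩, hi, rfl, rfl, h⟩

lemma adj_iff {x y : DoobVertex m n} : (doobGraph m n).Adj x y ↔ x - y ∈ conn m n := by
  refine SimpleGraph.fromRel_adj_iff_sub_mem (fun x y => ?_) ?_ ?_
  · simp only [mem_conn, shrikhande_adj_iff_s17, mem_k4Conn, Prod.fst_sub, Prod.snd_sub,
      Pi.sub_apply, sub_eq_zero, sub_ne_zero]
  · simp only [mem_conn, Prod.fst_zero, Prod.snd_zero, Pi.zero_apply, not_or, not_exists,
      not_and]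
    exact ⟨fun _ h => absurd h zero_notMem_shrikhandeConn,
      fun _ h => absurd h zero_notMem_k4Conn⟩
  · intro z hz
    simp only [mem_conn, Prod.fst_neg, Prod.snd_neg, Pi.neg_apply, neg_eq_zero] at hz ⊢
    exact hz.imp (fun ⟨i, hi, h⟩ => ⟨i, neg_mem_shrikhandeConn _ hi, h⟩)
      (fun ⟨i, hi, h⟩ => ⟨i, neg_mem_k4Conn _ hi, h⟩)

lemma sum_conn {M : Type*} [AddCommMonoid M] (g : DoobVertex m n → M) :
    ∑ s ∈ conn m n, g s =
      ∑ i, ∑ u ∈ shrikhandeConn, g (singleS i u) + ∑ i, ∑ t ∈ k4Conn, g (singleK i t) := by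
  have hS : ∀ p ∈ (univ : Finset (Fin m)) ×ˢ shrikhandeConn, p.2 ≠ 0 := fun p hp h =>
    zero_notMem_shrikhandeConn (h ▸ (mem_product.1 hp).2)
  have hK : ∀ p ∈ (univ : Finset (Fin n)) ×ˢ k4Conn, p.2 ≠ 0 := fun p hp h =>
    zero_notMem_k4Conn (h ▸ (mem_product.1 hp).2)
  have hdisj : Disjoint ((univ ×ˢ shrikhandeConn).image fun p => singleS (n := n) p.1 p.2)
      ((univ ×ˢ k4Conn).image fun p => singleK (m := m) p.1 p.2) := by
    simp only [Finset.disjoint_left, mem_image, not_exists, not_and]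
    rintro _ ⟨p, hp, rfl⟩ q - h
    exact hS p hp (by simpa using (congrFun (congrArg Prod.fst h) p.1).symm)
  rw [conn, sum_union hdisj,
    sum_image fun p hp q hq h => Pi.injOn_single (hS p hp) (hS q hq) (congrArg Prod.fst h),
    sum_image fun p hp q hq h => Pi.injOn_single (hK p hp) (hK q hq) (congrArg Prod.snd h),
    sum_product, sum_product]

lemma exists_sum_conn_addChar (ψ : AddChar (DoobVertex m n) ℂ) :
    ∃ I ≤ 2 * m + n, ∑ s ∈ conn m n, (ψ s - 1) = -4 * I := by
  choose a ha hsa using fun i =>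
    exists_sum_shrikhandeConn_addChar (ψ.compAddMonoidHom (singleS i))
  choose c hc hsc using fun i => exists_sum_k4Conn_addChar (ψ.compAddMonoidHom (singleK i))
  refine ⟨∑ i, a i + ∑ i, c i, ?_, ?_⟩
  · calc ∑ i, a i + ∑ i, c i ≤ ∑ _ : Fin m, 2 + ∑ _ : Fin n, 1 :=
          add_le_add (sum_le_sum fun i _ => ha i) (sum_le_sum fun i _ => hc i)
      _ = 2 * m + n := by simp [mul_comm]
  · simp only [AddChar.compAddMonoidHom_apply] at hsa hsc
    rw [sum_conn, sum_congr rfl fun i _ => hsa i, sum_congr rfl fun i _ => hsc i]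
    push_cast
    rw [mul_add, mul_sum, mul_sum]

lemma exists_eq_two_mul_of_isPerfectBCColoring {f : DoobVertex m n → Fin 2} {b : ℕ}
    (hb : 0 < b) (hf : IsPerfectBCColoring (doobGraph m n) f b b) :
    ∃ I, 1 ≤ I ∧ I ≤ 2 * m + n ∧ b = 2 * I := by
  have hopp := (isPerfectBCColoring_iff_card_filter_ne (fun _ _ => adj_iff) hb).1 hf
  have hχ : (fun x => (-1 : ℂ) ^ (f x : ℕ)) ≠ 0 :=
    Function.ne_iff.2 ⟨0, pow_ne_zero _ (neg_ne_zero.2 one_ne_zero)⟩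
  obtain ⟨ψ, hψ⟩ := exists_addChar_sum_sub_one_eq _ hχ (sum_neg_one_pow_sub_eq hopp)
  obtain ⟨I, hI, hψI⟩ := exists_sum_conn_addChar ψ
  have hbI : b = 2 * I := by
    have : (b : ℂ) = 2 * I := by linear_combination -(hψ.symm.trans hψI) / 2
    exact_mod_cast this
  exact ⟨I, by omega, hI, hbI⟩

def sumColoring (gS : Fin m → ZMod 4 × ZMod 4 → Fin 2) (gK : Fin n → ZMod 4 → Fin 2)
    (x : DoobVertex m n) : Fin 2 :=
  ∑ i, gS i (x.1 i) + ∑ i, gK i (x.2 i)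

lemma card_filter_sumColoring_ne (gS : Fin m → ZMod 4 × ZMod 4 → Fin 2)
    (gK : Fin n → ZMod 4 → Fin 2) (x : DoobVertex m n) :
    #{s ∈ conn m n | sumColoring gS gK (x - s) ≠ sumColoring gS gK x} =
      ∑ i, #{u ∈ shrikhandeConn | gS i (x.1 i - u) ≠ gS i (x.1 i)} +
        ∑ i, #{t ∈ k4Conn | gK i (x.2 i - t) ≠ gK i (x.2 i)} := by
  have hS : ∀ i u, sumColoring gS gK (x - singleS i u) ≠ sumColoring gS gK x ↔
      gS i (x.1 i - u) ≠ gS i (x.1 i) := by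
    intro i u
    rw [← sub_ne_zero, ← sub_ne_zero (b := gS i _), ← Finset.sum_apply_sub_single_sub gS]
    simp [sumColoring]
  have hK : ∀ i t, sumColoring gS gK (x - singleK i t) ≠ sumColoring gS gK x ↔
      gK i (x.2 i - t) ≠ gK i (x.2 i) := by
    intro i t
    rw [← sub_ne_zero, ← sub_ne_zero (b := gK i _), ← Finset.sum_apply_sub_single_sub gK]
    simp [sumColoring]
  simp only [card_filter, sum_conn, hS, hK]

lemma exists_card_filter_ne_eq {i : ℕ} (hi : i ≤ 2 * m + n) :
    ∃ f : DoobVertex m n → Fin 2, ∀ x, #{s ∈ conn m n | f (x - s) ≠ f x} = 2 * i := by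
  obtain ⟨w, hw, hwi⟩ := Finset.exists_le_sum_eq (univ : Finset (Fin m ⊕ Fin n))
    (Sum.elim (fun _ => 2) (fun _ => 1)) (k := i) (by simpa [mul_comm] using hi)
  choose gS hgS using fun j => exists_shrikhande_coloring (hw (.inl j))
  choose gK hgK using fun j => exists_k4_coloring (hw (.inr j))
  refine ⟨sumColoring gS gK, fun x => ?_⟩
  rw [card_filter_sumColoring_ne, ← hwi, Fintype.sum_sum_type, mul_add, mul_sum, mul_sum]
  simp only [hgS, hgK]

end Doob

theorem stmt_17_general (m n b : ℕ) (hb : 0 < b) :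
    (∃ f : DoobVertex m n → Fin 2,
      IsPerfectBCColoring (doobGraph m n) f b b) ↔
    (Even b ∧ ∃ i : ℕ, 1 ≤ i ∧ i ≤ 2 * m + n ∧ 2 * b = 4 * i) := by
  constructor
  · rintro ⟨f, hf⟩
    obtain ⟨i, hi₁, hi₂, rfl⟩ := Doob.exists_eq_two_mul_of_isPerfectBCColoring hb hf
    exact ⟨even_two_mul i, i, hi₁, hi₂, by ring⟩
  · rintro ⟨-, i, -, hi, hbi⟩
    obtain rfl : b = 2 * i := by omega
    obtain ⟨f, hf⟩ := Doob.exists_card_filter_ne_eq (m := m) (n := n) hi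
    exact ⟨f, (isPerfectBCColoring_iff_card_filter_ne (fun _ _ => Doob.adj_iff) hb).2 hf⟩

theorem stmt_17 (m n b : ℕ) (hb : 0 < b) (hmn : 1 ≤ 2 * m + n) :
    (∃ f : DoobVertex m n → Fin 2,
      IsPerfectBCColoring (doobGraph m n) f b b) ↔
    (Even b ∧ ∃ i : ℕ, 1 ≤ i ∧ i ≤ 2 * m + n ∧ 2 * b = 4 * i) :=
  stmt_17_general m n b hb
end
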